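/- Let Ψ be a partition of ℝ^d with mesh ε, A ⊆ ℝ^d finite, q the snapping map, γ a p-cycle in Čech_1(A), and suppose γ has two distinct vertices x, y lying in the same cell of Ψ. Let γ' = Glue_{x,y}(γ), with the new vertex z placed at the location of y. Then every simplex of the cone chain Γ = z · (Star_γ(x) ∪ Star_γ(y)) lies in Čech_{1+ε}(A ∪ {z}), hence γ and γ' are homologous in Čech_{1+ε} of the augmented point set. -/
import Mathlib


/-- The radius of the smallest closed ball enclosing `B`. -/
noncomputable def encRad {d : ℕ} (B : Finset (EuclideanSpace ℝ (Fin d))) : ℝ :=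
  sInf {r | ∃ x, ∀ b ∈ B, dist b x ≤ r}

/-- The Čech complex of `A ⊆ ℝ^d` at scale `r`: nonempty subsets of `A` such that the closed
balls of radius `r` around the points have a common point. -/
def cech (d : ℕ) (r : ℝ) (A : Finset (EuclideanSpace ℝ (Fin d))) :
    Set (Finset (EuclideanSpace ℝ (Fin d))) :=
  {B | B.Nonempty ∧ ↑B ⊆ (↑A : Set (EuclideanSpace ℝ (Fin d))) ∧ ∃ x, ∀ b ∈ B, dist b x ≤ r}

/-- `Ψ` is a partition of `ℝ^d` into cells of diameter at most `ε`. -/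
def IsPartitionMesh (d : ℕ) (ε : ℝ) (Ψ : Set (Set (EuclideanSpace ℝ (Fin d)))) : Prop :=
  (∀ x, ∃! ψ, ψ ∈ Ψ ∧ x ∈ ψ) ∧ ∀ ψ ∈ Ψ, EMetric.diam ψ ≤ ENNReal.ofReal ε

attribute [local instance] Classical.propDecidable

/-- The mod-2 simplicial boundary operator on formal sums of finite vertex sets. -/
noncomputable def bdry (V : Type*) [DecidableEq V] :
    (Finset V →₀ ZMod 2) →ₗ[ZMod 2] (Finset V →₀ ZMod 2) :=
  Finsupp.lsum (ZMod 2) fun σ =>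
    LinearMap.toSpanSingleton (ZMod 2) _ (∑ v ∈ σ, Finsupp.single (σ.erase v) (1 : ZMod 2))

/-- Chains supported on the `p`-simplices (sets of `p+1` vertices) of `K`. -/
noncomputable def chainsIn {V : Type*} (K : Set (Finset V)) (p : ℕ) :
    Submodule (ZMod 2) (Finset V →₀ ZMod 2) :=
  Finsupp.supported (ZMod 2) (ZMod 2) {σ | σ ∈ K ∧ σ.card = p + 1}

noncomputable def cyclesIn {V : Type*} [DecidableEq V] (K : Set (Finset V)) (p : ℕ) :
    Submodule (ZMod 2) (Finset V →₀ ZMod 2) :=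
  chainsIn K p ⊓ LinearMap.ker (bdry V)

noncomputable def bdriesIn {V : Type*} [DecidableEq V] (K : Set (Finset V)) (p : ℕ) :
    Submodule (ZMod 2) (Finset V →₀ ZMod 2) :=
  Submodule.map (bdry V) (chainsIn K (p + 1))

/-- The `p`-th persistent Betti number of `K ⊆ L`: the rank of the image of
`H_p(K) → H_p(L)`, computed as `Z_p(K) / (Z_p(K) ∩ B_p(L))`. -/
noncomputable def pBetti {V : Type*} [DecidableEq V] (K L : Set (Finset V)) (p : ℕ) : Cardinal :=
  Module.rank (ZMod 2) ↥(Submodule.map (bdriesIn L p).mkQ (cyclesIn K p))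

noncomputable def betti {V : Type*} [DecidableEq V] (K : Set (Finset V)) (p : ℕ) : Cardinal :=
  pBetti K K p

/-- Pushforward of a `p`-chain along a vertex map; degenerate simplices are dropped and
coinciding images cancel mod 2. -/
noncomputable def pushChain {V W : Type*} [DecidableEq V] [DecidableEq W]
    (q : V → W) (p : ℕ) (c : Finset V →₀ ZMod 2) : Finset W →₀ ZMod 2 :=
  Finsupp.filter (fun τ => τ.card = p + 1)
    (Finsupp.mapDomain (fun σ : Finset V => σ.image q) c)

/-- Gluing vertices `x` and `y` of a `p`-chain to a new vertex `z`. -/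
noncomputable def glueChain {V : Type*} [DecidableEq V] (x y z : V) (p : ℕ)
    (c : Finset V →₀ ZMod 2) : Finset V →₀ ZMod 2 :=
  pushChain (fun v => if v = x ∨ v = y then z else v) p c

/-- The star of a vertex in a chain: the simplices of the chain containing it. -/
noncomputable def starChain {V : Type*} (x : V) (c : Finset V →₀ ZMod 2) :
    Finset V →₀ ZMod 2 :=
  Finsupp.filter (fun σ => x ∈ σ) c

/-- The cone over a chain with apex `z`. -/
noncomputable def coneChain {V : Type*} [DecidableEq V] (z : V) (c : Finset V →₀ ZMod 2) :
    Finset V →₀ ZMod 2 :=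
  Finsupp.mapDomain (insert z) c

section Helpers

set_option linter.unusedSectionVars false

variable {V : Type*} [DecidableEq V]

private lemma zmod2_one : ∀ a : ZMod 2, a ≠ 0 → a = 1 := by decide

private lemma chain_add_self (c : Finset V →₀ ZMod 2) : c + c = 0 := by
  have h : ((1 : ZMod 2) + 1) = 0 := by decide
  calc c + c = ((1 : ZMod 2) + 1) • c := by rw [add_smul, one_smul]
    _ = 0 := by rw [h, zero_smul]

private lemma chain_eq_of_add_eq_zero {a b : Finset V →₀ ZMod 2} (h : a + b = 0) : a = b := by
  have h2 := neg_eq_of_add_eq_zero_left h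
  have h3 := neg_eq_of_add_eq_zero_left (chain_add_self b)
  rw [← h2]; exact h3

private lemma chain_eq_sum (c : Finset V →₀ ZMod 2) :
    c = ∑ σ ∈ c.support, Finsupp.single σ 1 := by
  conv_lhs => rw [← Finsupp.sum_single c]
  rw [Finsupp.sum]
  exact Finset.sum_congr rfl fun σ hσ => by
    rw [zmod2_one _ (Finsupp.mem_support_iff.mp hσ)]

private lemma bdry_single (σ : Finset V) :
    bdry V (Finsupp.single σ (1 : ZMod 2)) = ∑ v ∈ σ, Finsupp.single (σ.erase v) 1 := by
  rw [bdry, Finsupp.lsum_single, LinearMap.toSpanSingleton_apply, one_smul]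

private lemma imgA {x y : V} {σ : Finset V} (hx : x ∈ σ) (hy : y ∉ σ) :
    σ.image (fun v => if v = x ∨ v = y then y else v) = insert y (σ.erase x) := by
  ext w
  simp only [Finset.mem_image, Finset.mem_insert, Finset.mem_erase]
  constructor
  · rintro ⟨v, hv, rfl⟩
    by_cases h : v = x ∨ v = y
    · rw [if_pos h]; exact Or.inl rfl
    · push_neg at h
      rw [if_neg (by tauto)]
      exact Or.inr ⟨h.1, hv⟩
  · rintro (rfl | ⟨hwx, hw⟩)
    · exact ⟨x, hx, by rw [if_pos (Or.inl rfl)]⟩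
    · refine ⟨w, hw, ?_⟩
      rw [if_neg]
      push_neg
      exact ⟨hwx, fun h => absurd (h ▸ hw) hy⟩

private lemma imgB {x y : V} (hxy : x ≠ y) {σ : Finset V} (hx : x ∈ σ) (hy : y ∈ σ) :
    σ.image (fun v => if v = x ∨ v = y then y else v) = σ.erase x := by
  ext w
  simp only [Finset.mem_image, Finset.mem_erase]
  constructor
  · rintro ⟨v, hv, rfl⟩
    by_cases h : v = x ∨ v = y
    · rw [if_pos h]; exact ⟨hxy.symm, hy⟩
    · push_neg at h
      rw [if_neg (by tauto)]
      exact ⟨h.1, hv⟩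
  · rintro ⟨hwx, hw⟩
    by_cases hwy : w = y
    · subst hwy
      exact ⟨x, hx, by rw [if_pos (Or.inl rfl)]⟩
    · exact ⟨w, hw, by rw [if_neg (by tauto)]⟩

private lemma imgC {x y : V} {σ : Finset V} (hx : x ∉ σ) :
    σ.image (fun v => if v = x ∨ v = y then y else v) = σ := by
  have h : ∀ v ∈ σ, (if v = x ∨ v = y then y else v) = v := by
    intro v hv
    by_cases hvy : v = y
    · subst hvy; rw [if_pos (Or.inr rfl)]
    · rw [if_neg (by rintro (rfl | rfl); exacts [hx hv, hvy rfl])]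
  rw [Finset.image_congr (fun v hv => h v hv), Finset.image_id']

private lemma glue_key (p : ℕ) (x y : V) (hxy : x ≠ y) (γ : Finset V →₀ ZMod 2)
    (hcard : ∀ σ ∈ γ.support, σ.card = p + 1) (hbd : bdry V γ = 0) :
    bdry V (Finsupp.mapDomain (insert y)
        (Finsupp.filter (fun σ => x ∈ σ ∧ y ∉ σ) γ)) = γ + glueChain x y y p γ := by
  classical
  set S := γ.support with hS
  set A1 : Finset V →₀ ZMod 2 :=
    ∑ σ ∈ S.filter (fun σ => x ∈ σ ∧ y ∉ σ), Finsupp.single σ 1 with hA1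
  set A2 : Finset V →₀ ZMod 2 :=
    ∑ σ ∈ S.filter (fun σ => x ∈ σ ∧ y ∉ σ), Finsupp.single (insert y (σ.erase x)) 1 with hA2
  set R : Finset V →₀ ZMod 2 :=
    ∑ σ ∈ S.filter (fun σ => x ∈ σ ∧ y ∉ σ),
      ∑ v ∈ σ.erase x, Finsupp.single (insert y (σ.erase v)) 1 with hR
  set B : Finset V →₀ ZMod 2 :=
    ∑ σ ∈ S.filter (fun σ => x ∈ σ ∧ y ∈ σ), Finsupp.single σ 1 with hB
  set C : Finset V →₀ ZMod 2 :=
    ∑ σ ∈ S.filter (fun σ => x ∉ σ), Finsupp.single σ 1 with hC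
  -- splitting a sum over S into the three classes
  have hsplit : ∀ g : Finset V → (Finset V →₀ ZMod 2),
      ∑ σ ∈ S, g σ = ∑ σ ∈ S.filter (fun σ => x ∈ σ ∧ y ∉ σ), g σ +
        ∑ σ ∈ S.filter (fun σ => x ∈ σ ∧ y ∈ σ), g σ +
        ∑ σ ∈ S.filter (fun σ => x ∉ σ), g σ := by
    intro g
    rw [← Finset.sum_filter_add_sum_filter_not S (fun σ => x ∈ σ) g,
      ← Finset.sum_filter_add_sum_filter_not (S.filter (fun σ => x ∈ σ)) (fun σ => y ∉ σ) g,
      Finset.filter_filter, Finset.filter_filter]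
    congr 1
    congr 1
    exact Finset.sum_congr (Finset.filter_congr (fun σ _ => by tauto)) (fun _ _ => rfl)
  -- h1 : LHS = A1 + (A2 + R)
  have e1 : Finsupp.filter (fun σ => x ∈ σ ∧ y ∉ σ) γ =
      ∑ σ ∈ S.filter (fun σ => x ∈ σ ∧ y ∉ σ), Finsupp.single σ 1 := by
    rw [Finsupp.filter_eq_sum]
    refine Finset.sum_congr rfl fun σ hσ => ?_
    rw [zmod2_one _ (Finsupp.mem_support_iff.mp (Finset.mem_filter.mp hσ).1)]
  have h1 : bdry V (Finsupp.mapDomain (insert y)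
      (Finsupp.filter (fun σ => x ∈ σ ∧ y ∉ σ) γ)) = A1 + (A2 + R) := by
    rw [e1, Finsupp.mapDomain_finset_sum]
    simp only [Finsupp.mapDomain_single]
    rw [map_sum]
    have estep : ∀ σ ∈ S.filter (fun σ => x ∈ σ ∧ y ∉ σ),
        bdry V (Finsupp.single (insert y σ) (1 : ZMod 2)) =
        Finsupp.single σ 1 + (Finsupp.single (insert y (σ.erase x)) 1 +
          ∑ v ∈ σ.erase x, Finsupp.single (insert y (σ.erase v)) 1) := by
      intro σ hσ
      obtain ⟨hσS, hxσ, hyσ⟩ := Finset.mem_filter.mp hσ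
      rw [bdry_single, Finset.sum_insert hyσ, Finset.erase_insert hyσ]
      congr 1
      have step : ∀ v ∈ σ, Finsupp.single ((insert y σ).erase v) (1 : ZMod 2) =
          Finsupp.single (insert y (σ.erase v)) 1 := by
        intro v hv
        rw [Finset.erase_insert_of_ne (show y ≠ v from fun h => hyσ (by rw [h]; exact hv))]
      rw [Finset.sum_congr rfl step, ← Finset.add_sum_erase _ _ hxσ]
    rw [Finset.sum_congr rfl estep, Finset.sum_add_distrib, Finset.sum_add_distrib]
  -- h2 : R = B, from the cycle condition
  have hbdsum : bdry V γ = ∑ σ ∈ S, ∑ v ∈ σ, Finsupp.single (σ.erase v) 1 := by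
    conv_lhs => rw [chain_eq_sum γ]
    rw [map_sum]
    exact Finset.sum_congr rfl fun σ _ => bdry_single σ
  have h2 : R = B := by
    apply chain_eq_of_add_eq_zero
    have hz : Finsupp.mapDomain (insert y) (Finsupp.filter (fun τ => x ∈ τ ∧ y ∉ τ)
        (∑ σ ∈ S, ∑ v ∈ σ, Finsupp.single (σ.erase v) (1 : ZMod 2))) = 0 := by
      rw [← hbdsum, hbd, Finsupp.filter_zero, Finsupp.mapDomain_zero]
    rw [hsplit fun σ => ∑ v ∈ σ, Finsupp.single (σ.erase v) 1,
      Finsupp.filter_add, Finsupp.filter_add] at hz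
    have eA : Finsupp.filter (fun τ => x ∈ τ ∧ y ∉ τ)
        (∑ σ ∈ S.filter (fun σ => x ∈ σ ∧ y ∉ σ), ∑ v ∈ σ, Finsupp.single (σ.erase v) (1 : ZMod 2)) =
        ∑ σ ∈ S.filter (fun σ => x ∈ σ ∧ y ∉ σ),
          ∑ v ∈ σ.erase x, Finsupp.single (σ.erase v) 1 := by
      rw [Finsupp.filter_sum]
      refine Finset.sum_congr rfl fun σ hσ => ?_
      obtain ⟨hσS, hxσ, hyσ⟩ := Finset.mem_filter.mp hσ
      rw [Finsupp.filter_sum, ← Finset.add_sum_erase _ _ hxσ,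
        Finsupp.filter_single_of_neg _ (by simp), zero_add]
      refine Finset.sum_congr rfl fun v hv => ?_
      obtain ⟨hvx, hvσ⟩ := Finset.mem_erase.mp hv
      exact Finsupp.filter_single_of_pos _
        ⟨Finset.mem_erase.mpr ⟨Ne.symm hvx, hxσ⟩, fun h => hyσ (Finset.mem_of_mem_erase h)⟩
    have eB : Finsupp.filter (fun τ => x ∈ τ ∧ y ∉ τ)
        (∑ σ ∈ S.filter (fun σ => x ∈ σ ∧ y ∈ σ), ∑ v ∈ σ, Finsupp.single (σ.erase v) (1 : ZMod 2)) =
        ∑ σ ∈ S.filter (fun σ => x ∈ σ ∧ y ∈ σ), Finsupp.single (σ.erase y) 1 := by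
      rw [Finsupp.filter_sum]
      refine Finset.sum_congr rfl fun σ hσ => ?_
      obtain ⟨hσS, hxσ, hyσ⟩ := Finset.mem_filter.mp hσ
      rw [Finsupp.filter_sum, ← Finset.add_sum_erase _ _ hyσ,
        Finsupp.filter_single_of_pos _ ⟨Finset.mem_erase.mpr ⟨hxy, hxσ⟩, by simp⟩]
      have hrest : ∀ v ∈ σ.erase y,
          Finsupp.filter (fun τ => x ∈ τ ∧ y ∉ τ) (Finsupp.single (σ.erase v) (1 : ZMod 2))
            = 0 := by
        intro v hv
        obtain ⟨hvy, hvσ⟩ := Finset.mem_erase.mp hv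
        exact Finsupp.filter_single_of_neg _
          (fun hc => hc.2 (Finset.mem_erase.mpr ⟨Ne.symm hvy, hyσ⟩))
      rw [Finset.sum_congr rfl hrest, Finset.sum_const_zero, add_zero]
    have eC : Finsupp.filter (fun τ => x ∈ τ ∧ y ∉ τ)
        (∑ σ ∈ S.filter (fun σ => x ∉ σ), ∑ v ∈ σ, Finsupp.single (σ.erase v) (1 : ZMod 2)) = 0 := by
      rw [Finsupp.filter_sum]
      have hrest : ∀ σ ∈ S.filter (fun σ => x ∉ σ),
          Finsupp.filter (fun τ => x ∈ τ ∧ y ∉ τ)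
            (∑ v ∈ σ, Finsupp.single (σ.erase v) (1 : ZMod 2)) = 0 := by
        intro σ hσ
        obtain ⟨hσS, hxσ⟩ := Finset.mem_filter.mp hσ
        rw [Finsupp.filter_sum]
        have h0 : ∀ v ∈ σ,
            Finsupp.filter (fun τ => x ∈ τ ∧ y ∉ τ) (Finsupp.single (σ.erase v) (1 : ZMod 2))
              = 0 := fun v hv => Finsupp.filter_single_of_neg _
                (fun hc => hxσ (Finset.mem_of_mem_erase hc.1))
        rw [Finset.sum_congr rfl h0, Finset.sum_const_zero]
      rw [Finset.sum_congr rfl hrest, Finset.sum_const_zero]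
    rw [eA, eB, eC, add_zero, Finsupp.mapDomain_add] at hz
    simp only [Finsupp.mapDomain_finset_sum, Finsupp.mapDomain_single] at hz
    have e2 : ∀ σ ∈ S.filter (fun σ => x ∈ σ ∧ y ∈ σ),
        Finsupp.single (insert y (σ.erase y)) (1 : ZMod 2) = Finsupp.single σ 1 := by
      intro σ hσ
      rw [Finset.insert_erase (Finset.mem_filter.mp hσ).2.2]
    rw [Finset.sum_congr rfl e2] at hz
    exact hz
  -- h3 : glueChain = A2 + C
  have h3 : glueChain x y y p γ = A2 + C := by
    rw [glueChain, pushChain]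
    conv_lhs => rw [chain_eq_sum γ]
    rw [Finsupp.mapDomain_finset_sum]
    simp only [Finsupp.mapDomain_single]
    rw [Finsupp.filter_sum, hsplit]
    have eA : ∀ σ ∈ S.filter (fun σ => x ∈ σ ∧ y ∉ σ),
        Finsupp.filter (fun τ : Finset V => τ.card = p + 1)
          (Finsupp.single (σ.image (fun v => if v = x ∨ v = y then y else v)) (1 : ZMod 2)) =
        Finsupp.single (insert y (σ.erase x)) 1 := by
      intro σ hσ
      obtain ⟨hσS, hxσ, hyσ⟩ := Finset.mem_filter.mp hσ
      rw [imgA hxσ hyσ]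
      refine Finsupp.filter_single_of_pos _ ?_
      rw [Finset.card_insert_of_notMem (fun h => hyσ (Finset.mem_of_mem_erase h)),
        Finset.card_erase_of_mem hxσ, hcard σ hσS]
      omega
    have eB : ∀ σ ∈ S.filter (fun σ => x ∈ σ ∧ y ∈ σ),
        Finsupp.filter (fun τ : Finset V => τ.card = p + 1)
          (Finsupp.single (σ.image (fun v => if v = x ∨ v = y then y else v)) (1 : ZMod 2)) =
          0 := by
      intro σ hσ
      obtain ⟨hσS, hxσ, hyσ⟩ := Finset.mem_filter.mp hσ
      rw [imgB hxy hxσ hyσ]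
      refine Finsupp.filter_single_of_neg _ ?_
      rw [Finset.card_erase_of_mem hxσ, hcard σ hσS]
      simp
    have eC : ∀ σ ∈ S.filter (fun σ => x ∉ σ),
        Finsupp.filter (fun τ : Finset V => τ.card = p + 1)
          (Finsupp.single (σ.image (fun v => if v = x ∨ v = y then y else v)) (1 : ZMod 2)) =
        Finsupp.single σ 1 := by
      intro σ hσ
      obtain ⟨hσS, hxσ⟩ := Finset.mem_filter.mp hσ
      rw [imgC hxσ]
      exact Finsupp.filter_single_of_pos _ (hcard σ hσS)
    rw [Finset.sum_congr rfl eA, Finset.sum_congr rfl eB, Finset.sum_congr rfl eC,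
      Finset.sum_const_zero, add_zero]
  -- h4 : γ = A1 + B + C
  have h4 : γ = A1 + B + C := by
    conv_lhs => rw [chain_eq_sum γ]
    rw [hsplit]
  rw [h1, h2, h3]
  conv_rhs => rw [h4]
  have hCC : C + C = 0 := chain_add_self C
  have habel : A1 + B + C + (A2 + C) = A1 + (A2 + B) + (C + C) := by abel
  rw [habel, hCC, add_zero]

end Helpers

/-- gluing two vertices of a `p`-cycle of `Čech_1(A)` that lie in a common cell
of a partition of mesh `ε`, with the new vertex placed at `y`, yields a cone chain all of whose
simplices lie in `Čech_{1+ε}`, so the cycle and its glued image are homologous there. -/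
theorem glue_within_cell_homologous
    (d : ℕ) (ε : ℝ) (hε : 0 < ε)
    (Ψ : Set (Set (EuclideanSpace ℝ (Fin d)))) (hΨ : IsPartitionMesh d ε Ψ)
    (q : EuclideanSpace ℝ (Fin d) → Set (EuclideanSpace ℝ (Fin d)))
    (hq : ∀ x, q x ∈ Ψ ∧ x ∈ q x)
    (A : Finset (EuclideanSpace ℝ (Fin d))) (p : ℕ)
    (γ : Finset (EuclideanSpace ℝ (Fin d)) →₀ ZMod 2)
    (hγ : γ ∈ cyclesIn (cech d 1 A) p)
    (x y : EuclideanSpace ℝ (Fin d)) (hxy : x ≠ y)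
    (hx : ∃ σ ∈ γ.support, x ∈ σ) (hy : ∃ σ ∈ γ.support, y ∈ σ)
    (hcell : ∃ ψ ∈ Ψ, x ∈ ψ ∧ y ∈ ψ) :
    (∀ υ ∈ (coneChain y (Finsupp.filter (fun σ => x ∈ σ ∨ y ∈ σ) γ)).support,
        υ ∈ cech d (1 + ε) A) ∧
      γ + glueChain x y y p γ ∈ bdriesIn (cech d (1 + ε) A) p := by
  classical
  obtain ⟨hchain', hker⟩ := Submodule.mem_inf.mp hγ
  have hchain : ↑γ.support ⊆
      {σ : Finset (EuclideanSpace ℝ (Fin d)) | σ ∈ cech d 1 A ∧ σ.card = p + 1} :=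
    Finsupp.mem_supported _ γ |>.mp hchain'
  have hbd : bdry _ γ = 0 := LinearMap.mem_ker.mp hker
  have hdxy : dist x y ≤ ε := by
    obtain ⟨ψ, hψΨ, hxψ, hyψ⟩ := hcell
    have h1 : edist x y ≤ ENNReal.ofReal ε :=
      le_trans (EMetric.edist_le_diam_of_mem hxψ hyψ) (hΨ.2 ψ hψΨ)
    rw [edist_dist] at h1
    exact (ENNReal.ofReal_le_ofReal_iff hε.le).mp h1
  have hyA : y ∈ (↑A : Set (EuclideanSpace ℝ (Fin d))) := by
    obtain ⟨σ₀, hσ₀, hyσ₀⟩ := hy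
    obtain ⟨⟨hne, hsub, _⟩, _⟩ := hchain (Finset.mem_coe.mpr hσ₀)
    exact hsub hyσ₀
  have hmem : ∀ σ ∈ γ.support, (x ∈ σ ∨ y ∈ σ) → insert y σ ∈ cech d (1 + ε) A := by
    intro σ hσ hor
    obtain ⟨⟨hne, hsub, x₀, hx₀⟩, hcardσ⟩ := hchain (Finset.mem_coe.mpr hσ)
    refine ⟨Finset.insert_nonempty _ _, ?_, x₀, ?_⟩
    · rw [Finset.coe_insert]
      exact Set.insert_subset hyA hsub
    · intro b hb
      rcases Finset.mem_insert.mp hb with rfl | hbσ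
      · rcases hor with hxσ | hyσ
        · calc dist b x₀ ≤ dist b x + dist x x₀ := dist_triangle _ _ _
            _ ≤ ε + 1 := add_le_add (by rw [dist_comm]; exact hdxy) (hx₀ x hxσ)
            _ = 1 + ε := by ring
        · linarith [hx₀ b hyσ]
      · linarith [hx₀ b hbσ]
  constructor
  · intro υ hυ
    obtain ⟨σ, hσ, rfl⟩ := Finset.mem_image.mp (Finsupp.mapDomain_support hυ)
    rw [Finsupp.support_filter, Finset.mem_filter] at hσ
    exact hmem σ hσ.1 hσ.2
  · refine Submodule.mem_map.mpr
      ⟨Finsupp.mapDomain (insert y) (Finsupp.filter (fun σ => x ∈ σ ∧ y ∉ σ) γ), ?_, ?_⟩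
    · rw [chainsIn, Finsupp.mem_supported]
      intro τ hτ
      obtain ⟨σ, hσ, rfl⟩ :=
        Finset.mem_image.mp (Finsupp.mapDomain_support (Finset.mem_coe.mp hτ))
      rw [Finsupp.support_filter, Finset.mem_filter] at hσ
      obtain ⟨hσS, hxσ, hyσ⟩ := hσ
      refine ⟨hmem σ hσS (Or.inl hxσ), ?_⟩
      rw [Finset.card_insert_of_notMem hyσ, (hchain (Finset.mem_coe.mpr hσS)).2]
    · exact glue_key p x y hxy γ (fun σ hσ => (hchain (Finset.mem_coe.mpr hσ)).2) hbd
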